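/- Let A be an m×n complex matrix with orthonormal columns and let s_i be the multiplicity of value i in a sample from the Boson Sampling distribution q(z) = (1/μ(z))|Per A_z|^2. Then E[s_i(s_i − 1)] = 4 ∑_{1 ≤ k < ℓ ≤ n} |a_{i,k}|^2 |a_{i,ℓ}|^2. -/

import Mathlib

/-!
Write `c = #{t | r t = i}`. Then `c (c - 1)` counts the ordered pairs `t ≠ u` of positions with
`r t = r u = i`, so the moment splits as a sum over such pairs of the mass that `|Per A_r|² / n!`
puts on `{r t = r u = i}`. Expanding `|Per A_r|² = ∑_{σ,τ} ∏_v A_{r v, σ v} conj A_{r v, τ v}`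
and summing over the free rows, orthonormality of the columns forces `τ v = σ v` for every
`v ∉ {t, u}`, leaving `τ = σ` and `τ = σ ∘ (t u)`, i.e. `|Per A^c_{i,i}|²` for the columns
`c = {σ t, σ u}`. Averaging over `σ` turns the pair `(σ t, σ u)` into a uniformly chosen pair of
distinct columns.
-/

open Matrix

/-- The permanent of a square complex matrix. -/
noncomputable def perm {n : ℕ} (M : Matrix (Fin n) (Fin n) ℂ) : ℂ :=
  ∑ σ : Equiv.Perm (Fin n), ∏ i, M i (σ i)

open Finset ComplexConjugate Equiv

theorem Finset.natCast_card_offDiag {α R : Type*} [DecidableEq α] [Ring R] (s : Finset α) :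
    (#s.offDiag : R) = #s * (#s - 1) := by
  rcases s.eq_empty_or_nonempty with rfl | hs
  · simp
  · rw [offDiag_card, ← Nat.mul_sub_one, Nat.cast_mul, Nat.cast_sub hs.card_pos, Nat.cast_one]

theorem natCast_card_fiber_mul_sub_one {ι κ R : Type*} [Fintype ι] [DecidableEq ι]
    [DecidableEq κ] [Ring R] (r : ι → κ) (i : κ) :
    (#{t | r t = i} : R) * (#{t | r t = i} - 1) =
      ∑ p ∈ univ.offDiag, if r p.1 = i ∧ r p.2 = i then 1 else 0 := by
  rw [← natCast_card_offDiag, sum_boole]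
  congr 2
  ext p
  simp only [mem_offDiag, mem_filter, mem_univ, true_and]
  tauto

theorem Finset.sum_univ_offDiag_comp_perm {α M : Type*} [Fintype α] [DecidableEq α]
    [AddCommMonoid M] (σ : Perm α) (f : α → α → M) :
    ∑ p ∈ univ.offDiag, f (σ p.1) (σ p.2) = ∑ p ∈ univ.offDiag, f p.1 p.2 :=
  sum_equiv (σ.prodCongr σ) (by simp) (by simp)

theorem Finset.sum_univ_offDiag_eq_two_mul_sum_lt {α M : Type*} [Fintype α] [LinearOrder α]
    [DecidableLT α] [Semiring M] (f : α → α → M) (hf : ∀ k l, f k l = f l k) :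
    ∑ p ∈ univ.offDiag, f p.1 p.2 = 2 * ∑ k, ∑ l ∈ univ.filter (fun l => k < l), f k l := by
  rw [← sum_filter_add_sum_filter_not _ (fun p => p.1 < p.2),
    sum_finset_product _ univ (fun k => univ.filter (fun l => k < l)) (by simp; grind),
    sum_finset_product_right _ univ (fun k => univ.filter (fun l => k < l)) (by simp; grind),
    two_mul]
  congr 1
  exact sum_congr rfl fun k _ => sum_congr rfl fun l _ => hf l k

theorem Fintype.sum_pi_ite_forall_mem_mul_prod {ι κ R : Type*} [Fintype ι] [DecidableEq ι]
    [Fintype κ] [DecidableEq κ] [CommSemiring R] (S : Finset ι) (i : κ)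
    [DecidablePred fun r : ι → κ => ∀ v ∈ S, r v = i] (f : ι → κ → R) :
    ∑ r : ι → κ, (if ∀ v ∈ S, r v = i then 1 else 0) * ∏ v, f v (r v) =
      ∏ v, if v ∈ S then f v i else ∑ x, f v x := by
  have hind (r : ι → κ) : (if ∀ v ∈ S, r v = i then (1 : R) else 0) =
      ∏ v, if v ∈ S then (if r v = i then 1 else 0) else 1 := by
    simp [Finset.prod_boole]
  simp_rw [hind, ← prod_mul_distrib]
  rw [← Fintype.prod_sum fun v x => (if v ∈ S then if x = i then 1 else 0 else 1) * f v x]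
  refine Fintype.prod_congr _ _ fun v => ?_
  split_ifs <;> simp

theorem Equiv.Perm.eq_one_or_eq_swap_of_forall_notMem {α : Type*} [DecidableEq α]
    {ρ : Perm α} {t u : α} (h : ∀ v ∉ ({t, u} : Finset α), ρ v = v) :
    ρ = 1 ∨ ρ = swap t u := by
  have hpair : ∀ v ∈ ({t, u} : Finset α), ρ v ∈ ({t, u} : Finset α) := by
    intro v hv
    by_contra hρv
    exact (ne_of_mem_of_not_mem hv hρv) (ρ.injective (h _ hρv)).symm
  simp only [mem_insert, mem_singleton] at h hpair
  by_cases ht : ρ t = t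
  · left; ext v; simp only [Perm.one_apply]; grind [ρ.injective.eq_iff]
  · right; ext v; grind [ρ.injective.eq_iff]

-- The right-hand side is the permanent of the `2 × 2` block of `F` on `{t, u}`.
theorem Equiv.Perm.sum_prod_ite_mem_pair {ι R : Type*} [Fintype ι] [DecidableEq ι]
    [CommSemiring R] {t u : ι} (htu : t ≠ u) (F : ι → ι → R) :
    ∑ ρ : Perm ι, ∏ v, (if v ∈ ({t, u} : Finset ι) then F v (ρ v) else if ρ v = v then 1 else 0) =
      F t t * F u u + F t u * F u t := by
  have hswap : (1 : Perm ι) ≠ swap t u := fun h => htu (by simpa using congr($h t))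
  rw [Fintype.sum_eq_add 1 (swap t u) hswap]
  · rw [Fintype.prod_eq_mul t u htu (by simp +contextual),
      Fintype.prod_eq_mul t u htu (by simp +contextual [swap_apply_of_ne_of_ne])]
    simp [htu]
  · rintro ρ ⟨hρ1, hρswap⟩
    obtain ⟨v, hv, hρv⟩ : ∃ v ∉ ({t, u} : Finset ι), ρ v ≠ v := by
      by_contra! h
      exact (Perm.eq_one_or_eq_swap_of_forall_notMem h).elim hρ1 hρswap
    exact prod_eq_zero (mem_univ v) (by simp [hv, hρv])

theorem perm_mul_conj {n : ℕ} (M : Matrix (Fin n) (Fin n) ℂ) :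
    perm M * conj (perm M) =
      ∑ σ : Perm (Fin n), ∑ τ : Perm (Fin n), ∏ v, M v (σ v) * conj (M v (τ v)) := by
  simp only [perm, map_sum, map_prod, sum_mul_sum, prod_mul_distrib]

theorem sum_mul_conj_of_conjTranspose_mul_self_eq_one {m n R : Type*} [Fintype m]
    [DecidableEq n] [CommSemiring R] [StarRing R] {A : Matrix m n R} (hA : Aᴴ * A = 1)
    (k l : n) : ∑ x, A x k * conj (A x l) = if l = k then 1 else 0 := by
  simpa [mul_apply, one_apply, mul_comm, starRingEnd_apply] using congr($hA l k)

theorem sum_ite_eq_and_eq_mul_sq_norm_perm {m n : ℕ} {A : Matrix (Fin m) (Fin n) ℂ}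
    (hA : Aᴴ * A = 1) (i : Fin m) {t u : Fin n} (htu : t ≠ u) :
    ∑ r : Fin n → Fin m, (if r t = i ∧ r u = i then 1 else 0) *
        ‖perm (of fun s j => A (r s) j)‖ ^ 2 =
      2 * ∑ σ : Perm (Fin n), ‖A i (σ t)‖ ^ 2 * ‖A i (σ u)‖ ^ 2 := by
  have hpair (r : Fin n → Fin m) : (if r t = i ∧ r u = i then 1 else 0 : ℝ) =
      if ∀ v ∈ ({t, u} : Finset (Fin n)), r v = i then 1 else 0 := by
    simp
  simp_rw [hpair]
  apply Complex.ofReal_injective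
  push_cast [apply_ite Complex.ofReal]
  simp_rw [← Complex.mul_conj', perm_mul_conj, of_apply, mul_sum]
  calc _ = ∑ σ : Perm (Fin n), ∑ τ : Perm (Fin n), ∑ r : Fin n → Fin m,
        (if ∀ v ∈ ({t, u} : Finset (Fin n)), r v = i then 1 else 0) *
          ∏ v, A (r v) (σ v) * conj (A (r v) (τ v)) := by
        rw [sum_comm]
        exact sum_congr rfl fun σ _ => sum_comm
    _ = ∑ σ : Perm (Fin n), ∑ τ : Perm (Fin n), ∏ v, if v ∈ ({t, u} : Finset (Fin n))
          then A i (σ v) * conj (A i (τ v)) else if τ v = σ v then 1 else 0 := by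
        refine sum_congr rfl fun σ _ => sum_congr rfl fun τ _ => ?_
        rw [Fintype.sum_pi_ite_forall_mem_mul_prod _ i fun v x => A x (σ v) * conj (A x (τ v))]
        simp_rw [sum_mul_conj_of_conjTranspose_mul_self_eq_one hA]
    _ = _ := by
        refine sum_congr rfl fun σ _ => ?_
        rw [← Equiv.sum_comp (Equiv.mulLeft σ)]
        simp only [Equiv.coe_mulLeft, Perm.mul_apply, σ.injective.eq_iff]
        rw [Perm.sum_prod_ite_mem_pair htu fun v w => A i (σ v) * conj (A i (σ w))]
        ring

/-- Second factorial moment of the multiplicity of the value `i` in a Boson Sampling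
sample: `E[s_i(s_i − 1)] = 4 ∑_{k<ℓ} |a_{i,k}|² |a_{i,ℓ}|²`, using the expanded-space
representation of the expectation. -/
theorem expected_factorial_moment {m n : ℕ} (A : Matrix (Fin m) (Fin n) ℂ)
    (hA : Aᴴ * A = 1) (i : Fin m) :
    ∑ r : Fin n → Fin m,
      (((Finset.univ.filter (fun t => r t = i)).card : ℝ) *
        (((Finset.univ.filter (fun t => r t = i)).card : ℝ) - 1)) *
        ((1 / (n.factorial : ℝ)) *
          ‖perm (Matrix.of fun s j => A (r s) j)‖ ^ 2)
    = 4 * ∑ k : Fin n, ∑ l ∈ Finset.univ.filter (fun l => k < l),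
        ‖A i k‖ ^ 2 * ‖A i l‖ ^ 2 := by
  calc _ = 1 / (n.factorial : ℝ) * ∑ p ∈ univ.offDiag, ∑ r : Fin n → Fin m,
        (if r p.1 = i ∧ r p.2 = i then 1 else 0) * ‖perm (of fun s j => A (r s) j)‖ ^ 2 := by
        simp_rw [natCast_card_fiber_mul_sub_one, sum_mul, mul_sum]
        rw [sum_comm]
        exact sum_congr rfl fun p _ => sum_congr rfl fun r _ => mul_left_comm _ _ _
    _ = 1 / (n.factorial : ℝ) * ∑ p ∈ univ.offDiag,
          2 * ∑ σ : Perm (Fin n), ‖A i (σ p.1)‖ ^ 2 * ‖A i (σ p.2)‖ ^ 2 := by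
        congr 1
        refine sum_congr rfl fun p hp => ?_
        exact sum_ite_eq_and_eq_mul_sq_norm_perm hA i (mem_offDiag.mp hp).2.2
    _ = 1 / (n.factorial : ℝ) * ∑ σ : Perm (Fin n),
          2 * ∑ p ∈ univ.offDiag, ‖A i p.1‖ ^ 2 * ‖A i p.2‖ ^ 2 := by
        simp_rw [mul_sum]
        rw [sum_comm]
        simp_rw [← mul_sum, sum_univ_offDiag_comp_perm _ fun k l => ‖A i k‖ ^ 2 * ‖A i l‖ ^ 2]
    _ = _ := by
        rw [sum_const, card_univ, Fintype.card_perm, Fintype.card_fin, nsmul_eq_mul,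
          sum_univ_offDiag_eq_two_mul_sum_lt (fun k l => ‖A i k‖ ^ 2 * ‖A i l‖ ^ 2)
            fun k l => mul_comm _ _]
        field_simp
        ring
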